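/- (Finsler–Thorpe trick, positive version; Proposition 2.2 of the paper in coordinates.) Let r : Fin 4 → Fin 4 → Fin 4 → Fin 4 → ℝ be an algebraic curvature tensor in coordinates: r i j k l = −r j i k l = −r i j l k, r i j k l = r k l i j, and r i j k l + r j k i l + r k i j l = 0. For an antisymmetric ω : Fin 4 → Fin 4 → ℝ set Q(ω) := (1/4)·Σ_{i,j,k,l} r i j k l · ω i j · ω l k and P(ω) := ω 0 1 · ω 2 3 − ω 0 2 · ω 1 3 + ω 0 3 · ω 1 2. Then the following are equivalent: (i) Σ_{i,j,k,l} r i j k l · x i · y j · y k · x l > 0 for all linearly independent x, y : Fin 4 → ℝ (i.e., sec > 0); (ii) there exists τ ∈ ℝ such that Q(ω) + τ·P(ω) > 0 for every antisymmetric ω : Fin 4 → Fin 4 → ℝ with ω ≠ 0. -/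

import Mathlib

/-!
Finsler's lemma: if a quadratic form `Q` is positive on the nonzero null vectors of a quadratic
form `P`, then `Q + τ • P` is positive definite for some `τ`. Here `P` is the Pfaffian on
2-vectors of `ℝ⁴`; by the Plücker relations its nonzero null vectors are (up to scale) the
`x ∧ y` with `x, y` independent, and `Q (x ∧ y) = R(x, y, y, x)`. So `sec > 0` is exactly the
hypothesis of Finsler's lemma, and conversely `P` vanishes on every `x ∧ y`.

For Finsler's lemma, suppose no `τ` works and sort the `τ` according to the sign of `P` at a
vector where `Q + τ • P ≤ 0`. Both resulting sets of parameters are closed (compactness of the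
sphere), they are disjoint (along a segment on which `P` changes sign, `Q + τ • P` stays
nonpositive and `P` vanishes somewhere), and neither is all of `ℝ` (a nested-compact-sets
argument for large `|τ|`); this contradicts the connectedness of `ℝ`.
-/

open Finset Metric Set

namespace QuadraticMap

section Algebraic

variable {V : Type*} [AddCommGroup V] [Module ℝ V]

theorem map_smul_add_smul (Q : QuadraticForm ℝ V) (a b : ℝ) (u w : V) :
    Q (a • u + b • w) = a ^ 2 * Q u + b ^ 2 * Q w + a * b * polar Q u w := by
  simp only [QuadraticMap.map_add, QuadraticMap.map_smul, polar_smul_left, polar_smul_right,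
    smul_eq_mul]
  ring

/-- Along the segment from `u` to `w`, `P` changes sign and so vanishes somewhere; choosing the
sign of `w` so that `polar R u w ≤ 0` keeps `R` nonpositive along the way. -/
theorem exists_ne_zero_eq_zero_nonpos_of_sign_change (R P : QuadraticForm ℝ V) {u w : V}
    (hRu : R u ≤ 0) (hRw : R w ≤ 0) (hPu : 0 < P u) (hPw : P w < 0) :
    ∃ v ≠ 0, P v = 0 ∧ R v ≤ 0 := by
  wlog hpolar : polar R u w ≤ 0 generalizing w
  · refine this (w := -w) ?_ ?_ ?_ <;>
      simp only [QuadraticMap.map_neg, polar_neg_right, neg_nonpos] <;> linarith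
  let γ : ℝ → V := fun t => (1 - t) • u + t • w
  have hPγ : ∀ t, P (γ t) = (1 - t) ^ 2 * P u + t ^ 2 * P w + (1 - t) * t * polar P u w :=
    fun t => map_smul_add_smul P _ _ u w
  obtain ⟨t, ⟨ht0, ht1⟩, hPt⟩ : ∃ t ∈ Icc (0 : ℝ) 1, P (γ t) = 0 := by
    refine intermediate_value_Icc' zero_le_one ?_ ⟨?_, ?_⟩
    · simp_rw [hPγ]
      fun_prop
    · simp [hPγ, hPw.le]
    · simp [hPγ, hPu.le]
  refine ⟨γ t, fun hγ => ?_, hPt, ?_⟩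
  · have hpos : 0 < (1 - t) ^ 2 * P u - t ^ 2 * P w := by
      rcases eq_or_lt_of_le ht0 with rfl | ht0
      · simpa using hPu
      · nlinarith [sq_nonneg (1 - t), mul_pos (pow_pos ht0 2) (neg_pos.2 hPw)]
    have h : (1 - t) • u = -(t • w) := eq_neg_of_add_eq_zero_left hγ
    have := congrArg P h
    simp only [QuadraticMap.map_neg, QuadraticMap.map_smul, smul_eq_mul] at this
    nlinarith
  · rw [map_smul_add_smul]
    have : 0 ≤ (1 - t) * t := mul_nonneg (by linarith) ht0
    nlinarith [mul_nonneg this (neg_nonneg.2 hpolar), sq_nonneg (1 - t), sq_nonneg t]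

end Algebraic

section Normed

variable {V : Type*} [NormedAddCommGroup V] [NormedSpace ℝ V]

theorem continuous_of_finiteDimensional [FiniteDimensional ℝ V] (Q : QuadraticForm ℝ V) :
    Continuous Q := by
  let B : V →L[ℝ] V →L[ℝ] ℝ :=
    (LinearMap.toContinuousLinearMap.toLinearMap ∘ₗ associated Q).toContinuousLinearMap
  have hB : ⇑Q = fun x => B x x := by
    ext x
    simp [B, associated_eq_self_apply]
  rw [hB]
  fun_prop

theorem exists_ne_zero_iff_exists_mem_sphere (Q P : QuadraticForm ℝ V) (τ : ℝ) :
    (∃ v ≠ 0, 0 ≤ P v ∧ Q v + τ * P v ≤ 0) ↔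
      ∃ v ∈ sphere (0 : V) 1, 0 ≤ P v ∧ Q v + τ * P v ≤ 0 := by
  constructor
  · rintro ⟨v, hv, hPv, hQv⟩
    refine ⟨‖v‖⁻¹ • v, ?_, ?_, ?_⟩
    · rw [mem_sphere_zero_iff_norm, norm_smul, norm_inv, norm_norm,
        inv_mul_cancel₀ (norm_ne_zero_iff.2 hv)]
    all_goals simp only [QuadraticMap.map_smul, smul_eq_mul]
    · positivity
    · nlinarith [mul_self_nonneg ‖v‖⁻¹]
  · rintro ⟨v, hv, hPQ⟩
    exact ⟨v, ne_of_mem_sphere hv one_ne_zero, hPQ⟩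

variable [FiniteDimensional ℝ V]

theorem isClosed_setOf_exists_nonneg_nonpos (Q P : QuadraticForm ℝ V) :
    IsClosed {τ : ℝ | ∃ v ≠ 0, 0 ≤ P v ∧ Q v + τ * P v ≤ 0} := by
  have : CompactSpace (sphere (0 : V) 1) := isCompact_iff_compactSpace.1 (isCompact_sphere 0 1)
  have hQ := Q.continuous_of_finiteDimensional
  have hP := P.continuous_of_finiteDimensional
  have hset : {τ : ℝ | ∃ v ≠ 0, 0 ≤ P v ∧ Q v + τ * P v ≤ 0} =
      Prod.fst '' {p : ℝ × sphere (0 : V) 1 | 0 ≤ P p.2 ∧ Q p.2 + p.1 * P p.2 ≤ 0} := by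
    ext τ
    simp [exists_ne_zero_iff_exists_mem_sphere, and_left_comm]
  rw [hset, ofPred_and]
  exact isClosedMap_fst_of_compactSpace _
    ((isClosed_le (by fun_prop) (by fun_prop)).inter (isClosed_le (by fun_prop) (by fun_prop)))

theorem exists_pos_add_mul_of_nonneg (Q P : QuadraticForm ℝ V)
    (hpos : ∀ v ≠ 0, P v = 0 → 0 < Q v) :
    ∃ τ : ℝ, ∀ v ≠ 0, 0 ≤ P v → 0 < Q v + τ * P v := by
  by_contra! h
  let t : ℕ → Set V := fun n => sphere 0 1 ∩ ({v | 0 ≤ P v} ∩ {v | Q v + n * P v ≤ 0})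
  have hQ := Q.continuous_of_finiteDimensional
  have hP := P.continuous_of_finiteDimensional
  have hclosed : ∀ n, IsClosed (t n) := fun n =>
    isClosed_sphere.inter ((isClosed_le (by fun_prop) (by fun_prop)).inter
      (isClosed_le (by fun_prop) (by fun_prop)))
  obtain ⟨v, hv⟩ := IsCompact.nonempty_iInter_of_sequence_nonempty_isCompact_isClosed t
    (fun n v ⟨hv, hPv, hQv⟩ => ⟨hv, hPv, by
      simp only [mem_ofPred_eq, Nat.cast_succ] at hPv hQv ⊢; nlinarith⟩)
    (fun n => by
      obtain ⟨v, hv, hPv, hQv⟩ := h n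
      exact (exists_ne_zero_iff_exists_mem_sphere Q P n).1 ⟨v, hv, hPv, hQv⟩)
    ((isCompact_sphere 0 1).of_isClosed_subset (hclosed 0) inter_subset_left) hclosed
  simp only [mem_iInter, t, mem_inter_iff, mem_ofPred_eq] at hv
  have hv0 : v ≠ 0 := ne_of_mem_sphere (hv 0).1 one_ne_zero
  rcases (hv 0).2.1.eq_or_lt with hPv | hPv
  · have hQv : Q v ≤ 0 := by simpa [← hPv] using (hv 0).2.2
    exact (hpos v hv0 hPv.symm).not_ge hQv
  · obtain ⟨n, hn⟩ := exists_nat_gt (-Q v / P v)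
    rw [div_lt_iff₀ hPv] at hn
    linarith [(hv n).2.2]

/-- Finsler's lemma. -/
theorem exists_posDef_add_smul (Q P : QuadraticForm ℝ V) (hpos : ∀ v ≠ 0, P v = 0 → 0 < Q v) :
    ∃ τ : ℝ, (Q + τ • P).PosDef := by
  let A : Set ℝ := {τ | ∃ v ≠ 0, 0 ≤ P v ∧ Q v + τ * P v ≤ 0}
  let B : Set ℝ := {τ | ∃ v ≠ 0, 0 ≤ (-P) v ∧ Q v + τ * (-P) v ≤ 0}
  have hP_ne : ∀ {v τ}, v ≠ 0 → Q v + τ * P v ≤ 0 → P v ≠ 0 := fun hv hQ hP =>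
    (hpos _ hv hP).not_ge (by simpa [hP] using hQ)
  by_contra! h
  have hcompl : Aᶜ = Neg.neg ⁻¹' B := by
    ext τ
    constructor
    · intro hτ
      obtain ⟨v, hv, hQv⟩ : ∃ v ≠ 0, Q v + τ * P v ≤ 0 := by simpa [PosDef] using h τ
      refine ⟨v, hv, ?_, by simpa using hQv⟩
      simpa using (not_le.1 fun hP => hτ ⟨v, hv, hP, hQv⟩).le
    · rintro ⟨w, hw, hPw, hQw⟩ ⟨u, hu, hPu, hQu⟩
      simp only [neg_apply, neg_nonneg, mul_neg, neg_mul, neg_neg] at hPw hQw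
      obtain ⟨v, hv, hPv, hQv⟩ := exists_ne_zero_eq_zero_nonpos_of_sign_change (Q + τ • P) P
        (u := u) (w := w) (by simpa using hQu) (by simpa using hQw)
        (hPu.lt_of_ne (hP_ne hu hQu).symm) (hPw.lt_of_ne (hP_ne hw hQw))
      exact hP_ne (τ := τ) hv (by simpa using hQv) hPv
  have hA : IsClopen A := ⟨isClosed_setOf_exists_nonneg_nonpos Q P, isClosed_compl_iff.1 <|
    hcompl ▸ (isClosed_setOf_exists_nonneg_nonpos Q (-P)).preimage continuous_neg⟩
  rcases isClopen_iff.1 hA with hA_empty | hA_univ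
  · obtain ⟨τ, hτ⟩ := exists_pos_add_mul_of_nonneg Q (-P) fun v hv h => hpos v hv (neg_eq_zero.1 h)
    have : -τ ∈ Aᶜ := by simp [hA_empty]
    obtain ⟨v, hv, hPv, hQv⟩ : τ ∈ B := by simpa [hcompl] using this
    exact (hτ v hv hPv).not_ge hQv
  · obtain ⟨τ, hτ⟩ := exists_pos_add_mul_of_nonneg Q P hpos
    obtain ⟨v, hv, hPv, hQv⟩ : τ ∈ A := hA_univ ▸ mem_univ τ
    exact (hτ v hv hPv).not_ge hQv

end Normed

end QuadraticMap

namespace AlgebraicCurvature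

variable {ι : Type*}

def wedge (x y : ι → ℝ) : ι → ι → ℝ := fun i j => x i * y j - x j * y i

theorem wedge_antisymm (x y : ι → ℝ) (i j : ι) : wedge x y i j = -wedge x y j i := by
  simp only [wedge]; ring

theorem linearIndependent_pair_iff_exists_wedge_ne_zero {x y : ι → ℝ} :
    LinearIndependent ℝ ![x, y] ↔ ∃ i j, wedge x y i j ≠ 0 := by
  rw [LinearIndependent.pair_iff]
  constructor
  · intro h
    by_contra! hw
    by_cases hy : y = 0
    · simpa using h 0 1 (by simp [hy])
    · obtain ⟨q, hq⟩ := Function.ne_iff.1 hy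
      refine hq (h (y q) (-x q) (funext fun i => ?_)).1
      have hiq := hw i q
      simp only [wedge] at hiq
      simp only [Pi.add_apply, Pi.smul_apply, smul_eq_mul, Pi.zero_apply]
      linear_combination hiq
  · rintro ⟨p, q, hpq⟩ s t hst
    have hp : s * x p + t * y p = 0 := by simpa using congrFun hst p
    have hq : s * x q + t * y q = 0 := by simpa using congrFun hst q
    have hs : s * wedge x y p q = 0 := by
      simp only [wedge]; linear_combination y q * hp - y p * hq
    have ht : t * wedge x y p q = 0 := by
      simp only [wedge]; linear_combination x p * hq - x q * hp
    exact ⟨(mul_eq_zero.1 hs).resolve_right hpq, (mul_eq_zero.1 ht).resolve_right hpq⟩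

variable [Fintype ι]

def tensorEval (r : ι → ι → ι → ι → ℝ) (a b c d : ι → ℝ) : ℝ :=
  ∑ i, ∑ j, ∑ k, ∑ l, r i j k l * a i * b j * c k * d l

theorem tensorEval_swap_left {r : ι → ι → ι → ι → ℝ} (hr : ∀ i j k l, r i j k l = -r j i k l)
    (a b c d : ι → ℝ) : tensorEval r a b c d = -tensorEval r b a c d := by
  simp only [tensorEval, ← sum_neg_distrib]
  rw [sum_comm]
  refine sum_congr rfl fun i _ => sum_congr rfl fun j _ =>
    sum_congr rfl fun k _ => sum_congr rfl fun l _ => ?_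
  rw [hr]; ring

theorem tensorEval_swap_right {r : ι → ι → ι → ι → ℝ} (hr : ∀ i j k l, r i j k l = -r i j l k)
    (a b c d : ι → ℝ) : tensorEval r a b c d = -tensorEval r a b d c := by
  simp only [tensorEval, ← sum_neg_distrib]
  refine sum_congr rfl fun i _ => sum_congr rfl fun j _ => ?_
  rw [sum_comm]
  refine sum_congr rfl fun k _ => sum_congr rfl fun l _ => ?_
  rw [hr]; ring

def entry (i j : ι) : (ι → ι → ℝ) →ₗ[ℝ] ℝ := LinearMap.proj j ∘ₗ LinearMap.proj i

noncomputable def curvatureForm (r : ι → ι → ι → ι → ℝ) : QuadraticForm ℝ (ι → ι → ℝ) :=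
  (1 / 4 : ℝ) • ∑ i, ∑ j, ∑ k, ∑ l, r i j k l • QuadraticMap.linMulLin (entry i j) (entry l k)

theorem curvatureForm_apply (r : ι → ι → ι → ι → ℝ) (ω : ι → ι → ℝ) :
    curvatureForm r ω = 1 / 4 * ∑ i, ∑ j, ∑ k, ∑ l, r i j k l * ω i j * ω l k := by
  simp [curvatureForm, entry, mul_assoc]

theorem curvatureForm_wedge {r : ι → ι → ι → ι → ℝ}
    (hr1 : ∀ i j k l, r i j k l = -r j i k l) (hr2 : ∀ i j k l, r i j k l = -r i j l k)
    (x y : ι → ℝ) : curvatureForm r (wedge x y) = tensorEval r x y y x := by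
  have hexpand : ∑ i, ∑ j, ∑ k, ∑ l, r i j k l * wedge x y i j * wedge x y l k =
      tensorEval r x y y x - tensorEval r x y x y - tensorEval r y x y x +
        tensorEval r y x x y := by
    simp only [tensorEval, wedge, ← sum_sub_distrib, ← sum_add_distrib]
    refine sum_congr rfl fun i _ => sum_congr rfl fun j _ =>
      sum_congr rfl fun k _ => sum_congr rfl fun l _ => ?_
    ring
  rw [curvatureForm_apply, hexpand, tensorEval_swap_right hr2 x y x y,
    tensorEval_swap_left hr1 y x y x, tensorEval_swap_left hr1 y x x y,
    tensorEval_swap_right hr2 x y x y]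
  ring

variable (ι) in
def antisymmetric : Submodule ℝ (ι → ι → ℝ) where
  carrier := {ω | ∀ i j, ω i j = -ω j i}
  add_mem' {a b} ha hb i j := by simp only [Pi.add_apply, ha i j, hb i j]; ring
  zero_mem' := by simp
  smul_mem' c ω hω i j := by simp [hω i j]

def pfaffian : QuadraticForm ℝ (Fin 4 → Fin 4 → ℝ) :=
  QuadraticMap.linMulLin (entry 0 1) (entry 2 3) - QuadraticMap.linMulLin (entry 0 2) (entry 1 3) +
    QuadraticMap.linMulLin (entry 0 3) (entry 1 2)

theorem pfaffian_apply (ω : Fin 4 → Fin 4 → ℝ) :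
    pfaffian ω = ω 0 1 * ω 2 3 - ω 0 2 * ω 1 3 + ω 0 3 * ω 1 2 := by
  simp [pfaffian, entry]

theorem pfaffian_wedge (x y : Fin 4 → ℝ) : pfaffian (wedge x y) = 0 := by
  rw [pfaffian_apply]; simp only [wedge]; ring

/-- The Plücker relations: a 2-vector in `ℝ⁴` with vanishing Pfaffian is decomposable. -/
theorem wedge_eq_smul_of_pfaffian_eq_zero {ω : Fin 4 → Fin 4 → ℝ} (hω : ∀ i j, ω i j = -ω j i)
    (hP : pfaffian ω = 0) (p q : Fin 4) : wedge (ω p) (ω q) = ω p q • ω := by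
  rw [pfaffian_apply] at hP
  have hdiag : ∀ i, ω i i = 0 := fun i => by linarith [hω i i]
  funext i j
  simp only [wedge, Pi.smul_apply, smul_eq_mul]
  fin_cases p <;> fin_cases q <;> fin_cases i <;> fin_cases j <;>
    simp only [Fin.zero_eta, Fin.mk_one, Fin.reduceFinMk, hdiag, hω 1 0, hω 2 0, hω 3 0, hω 2 1,
      hω 3 1, hω 3 2] <;>
    first | linear_combination | linear_combination hP | linear_combination -hP

theorem curvatureForm_pos_of_pfaffian_eq_zero {r : Fin 4 → Fin 4 → Fin 4 → Fin 4 → ℝ}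
    (hr1 : ∀ i j k l, r i j k l = -r j i k l) (hr2 : ∀ i j k l, r i j k l = -r i j l k)
    (hsec : ∀ x y : Fin 4 → ℝ, LinearIndependent ℝ ![x, y] → 0 < tensorEval r x y y x)
    {ω : Fin 4 → Fin 4 → ℝ} (hω : ∀ i j, ω i j = -ω j i) (hω0 : ω ≠ 0) (hP : pfaffian ω = 0) :
    0 < curvatureForm r ω := by
  obtain ⟨p, q, hpq⟩ : ∃ p q, ω p q ≠ 0 := by
    by_contra! h
    exact hω0 (funext fun p => funext (h p))
  have hwedge := wedge_eq_smul_of_pfaffian_eq_zero hω hP p q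
  have hli : LinearIndependent ℝ ![ω p, ω q] :=
    linearIndependent_pair_iff_exists_wedge_ne_zero.2 ⟨p, q, by simp [hwedge, hpq]⟩
  have hsec_pq := hsec _ _ hli
  rw [← curvatureForm_wedge hr1 hr2, hwedge, QuadraticMap.map_smul, smul_eq_mul] at hsec_pq
  exact pos_of_mul_pos_right hsec_pq (mul_self_nonneg _)

end AlgebraicCurvature

open AlgebraicCurvature

theorem finsler_thorpe_trick_pos_general
    (r : Fin 4 → Fin 4 → Fin 4 → Fin 4 → ℝ)
    (hr1 : ∀ i j k l, r i j k l = -r j i k l)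
    (hr2 : ∀ i j k l, r i j k l = -r i j l k) :
    (∀ x y : Fin 4 → ℝ, LinearIndependent ℝ ![x, y] →
        0 < ∑ i, ∑ j, ∑ k, ∑ l, r i j k l * x i * y j * y k * x l) ↔
      ∃ τ : ℝ, ∀ ω : Fin 4 → Fin 4 → ℝ, (∀ i j, ω i j = -ω j i) → ω ≠ 0 →
        0 < (1 / 4) * (∑ i, ∑ j, ∑ k, ∑ l, r i j k l * ω i j * ω l k) +
              τ * (ω 0 1 * ω 2 3 - ω 0 2 * ω 1 3 + ω 0 3 * ω 1 2) := by
  constructor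
  · intro hsec
    let W := antisymmetric (Fin 4)
    obtain ⟨τ, hτ⟩ := QuadraticMap.exists_posDef_add_smul ((curvatureForm r).comp W.subtype)
      (pfaffian.comp W.subtype) fun ω hω0 hP =>
        curvatureForm_pos_of_pfaffian_eq_zero hr1 hr2 hsec ω.2 (by simpa using hω0) hP
    refine ⟨τ, fun ω hω hω0 => ?_⟩
    simpa [curvatureForm_apply, pfaffian_apply] using hτ ⟨ω, hω⟩ (ne_of_apply_ne Subtype.val hω0)
  · rintro ⟨τ, hτ⟩ x y hxy
    obtain ⟨i, j, hij⟩ := linearIndependent_pair_iff_exists_wedge_ne_zero.1 hxy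
    have h := hτ (wedge x y) (wedge_antisymm x y) fun h0 => hij (by simp [h0])
    rwa [← curvatureForm_apply, ← pfaffian_apply, curvatureForm_wedge hr1 hr2, pfaffian_wedge,
      mul_zero, add_zero] at h

/-- **Finsler–Thorpe trick, positive version** (Proposition 2.2 of the paper, in
coordinates).  An algebraic curvature tensor `r` on `ℝ⁴` has `sec > 0` if and only if
there exists `τ ∈ ℝ` such that `Q(ω) + τ · P(ω) > 0` for every nonzero antisymmetric
`ω`, where `Q` is the quadratic form of the curvature operator and `P` is the
Pfaffian. -/
theorem finsler_thorpe_trick_pos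
    (r : Fin 4 → Fin 4 → Fin 4 → Fin 4 → ℝ)
    (hr1 : ∀ i j k l, r i j k l = -r j i k l)
    (hr2 : ∀ i j k l, r i j k l = -r i j l k)
    (hr3 : ∀ i j k l, r i j k l = r k l i j)
    (hrb : ∀ i j k l, r i j k l + r j k i l + r k i j l = 0) :
    (∀ x y : Fin 4 → ℝ, LinearIndependent ℝ ![x, y] →
        0 < ∑ i, ∑ j, ∑ k, ∑ l, r i j k l * x i * y j * y k * x l) ↔
      ∃ τ : ℝ, ∀ ω : Fin 4 → Fin 4 → ℝ, (∀ i j, ω i j = -ω j i) → ω ≠ 0 →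
        0 < (1 / 4) * (∑ i, ∑ j, ∑ k, ∑ l, r i j k l * ω i j * ω l k) +
              τ * (ω 0 1 * ω 2 3 - ω 0 2 * ω 1 3 + ω 0 3 * ω 1 2) :=
  finsler_thorpe_trick_pos_general r hr1 hr2
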